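/- Let a, b be rational integers with 2 ≤ a ≤ b−2 and (a,b) ≠ (2,4). Then N_{K/ℚ}(α(v,W)) < N_{K/ℚ}(α(v,W+1)) for all integers v, W with 0 ≤ v ≤ b−a−2 and 0 ≤ W ≤ a−2. -/

import Mathlib

open IntermediateField

noncomputable section

/-- The element `α(v,W) = −v + (b(av+W)+1)ρ − (av+W)ρ²` of `ℚ(ρ) ⊆ ℝ`, where `ρ` is the
largest real root of `x³ − (a+b)x² + abx − 1`. -/
def alphaT (a b : ℤ) (ρ : ℝ) (v W : ℤ) : ℚ⟮ρ⟯ :=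
  -((v : ℤ) : ℚ⟮ρ⟯) + ((b * (a * v + W) + 1 : ℤ) : ℚ⟮ρ⟯) * AdjoinSimple.gen ℚ ρ
    - ((a * v + W : ℤ) : ℚ⟮ρ⟯) * AdjoinSimple.gen ℚ ρ ^ 2

set_option maxHeartbeats 2000000 in
/-- Let `2 ≤ a ≤ b−2` and `(a,b) ≠ (2,4)`. Then
`N(α(v,W)) < N(α(v,W+1))` for all integers `v, W` with `0 ≤ v ≤ b−a−2` and
`0 ≤ W ≤ a−2`. -/
theorem stmt_16 (a b : ℤ) (ha : 2 ≤ a) (hab : a ≤ b - 2)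
    (hexc : ¬ (a = 2 ∧ b = 4))
    (ρ : ℝ) (hroot : ρ ^ 3 - ((a : ℝ) + (b : ℝ)) * ρ ^ 2 + (a : ℝ) * (b : ℝ) * ρ - 1 = 0)
    (hmax : ∀ x : ℝ, x ^ 3 - ((a : ℝ) + (b : ℝ)) * x ^ 2 + (a : ℝ) * (b : ℝ) * x - 1 = 0 → x ≤ ρ)
    (hdeg : Module.finrank ℚ ℚ⟮ρ⟯ = 3)
    (v W : ℤ) (hv0 : 0 ≤ v) (hv1 : v ≤ b - a - 2) (hW0 : 0 ≤ W) (hW1 : W ≤ a - 2) :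
    Algebra.norm ℚ (alphaT a b ρ v W) < Algebra.norm ℚ (alphaT a b ρ v (W + 1)) := by
  classical
  set K := ℚ⟮ρ⟯
  set g : K := AdjoinSimple.gen ℚ ρ with hgdef
  set A : ℚ →+* K := algebraMap ℚ K with hAdef
  -- ρ is integral over ℚ
  have hint : IsIntegral ℚ ρ := by
    refine ⟨Polynomial.X ^ 3 - Polynomial.C ((a : ℚ) + b) * Polynomial.X ^ 2
      + Polynomial.C ((a : ℚ) * b) * Polynomial.X - 1, ?_, ?_⟩
    · monicity!
    · simp only [Polynomial.eval₂_sub, Polynomial.eval₂_add, Polynomial.eval₂_mul,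
        Polynomial.eval₂_pow, Polynomial.eval₂_X, Polynomial.eval₂_C, Polynomial.eval₂_one,
        eq_ratCast]
      push_cast
      linarith [hroot]
  -- the key cubic relation for g
  have hg3 : g ^ 3 = (A (a : ℚ) + A (b : ℚ)) * g ^ 2 - A (a : ℚ) * A (b : ℚ) * g + 1 := by
    apply (algebraMap K ℝ).injective
    have hA : ∀ q : ℚ, algebraMap K ℝ (A q) = (q : ℝ) := by
      intro q
      rw [hAdef, ← IsScalarTower.algebraMap_apply ℚ K ℝ, eq_ratCast]
    have hgρ : algebraMap K ℝ g = ρ := AdjoinSimple.algebraMap_gen ℚ ρ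
    simp only [map_pow, map_add, map_sub, map_mul, map_one, hA, hgρ]
    push_cast
    linarith [hroot]
  -- power basis
  set pb := IntermediateField.adjoin.powerBasis hint with hpb
  have hdim : pb.dim = 3 := by
    rw [hpb, IntermediateField.adjoin.powerBasis_dim,
      ← IntermediateField.adjoin.finrank hint]
    exact hdeg
  set B : Module.Basis (Fin 3) ℚ K := pb.basis.reindex (finCongr hdim) with hBdef
  have hB : ∀ i : Fin 3, B i = g ^ (i : ℕ) := by
    intro i
    rw [hBdef, Module.Basis.reindex_apply, pb.basis_eq_pow]
    congr 1
  have hB0 : B 0 = 1 := by rw [hB 0]; norm_num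
  have hB1 : B 1 = g := by rw [hB 1]; norm_num
  have hB2 : B 2 = g ^ 2 := by rw [hB 2]; norm_num
  -- norm formula
  have hnorm : ∀ c0 c1 c2 : ℚ,
      Algebra.norm ℚ (A c0 + A c1 * g + A c2 * g ^ 2) =
        c0^3 + c1^3 + c2^3 - 3*c0*c1*c2 + (b:ℚ)*c1^2*c2 - 2*(b:ℚ)*c0*c2^2
        + (b:ℚ)*c0^2*c1 + (b:ℚ)^2*c0^2*c2 + (a:ℚ)*c1^2*c2 - 2*(a:ℚ)*c0*c2^2
        + (a:ℚ)*c0^2*c1 + (a:ℚ)*(b:ℚ)*c1*c2^2 + (a:ℚ)*(b:ℚ)*c0*c1^2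
        + (a:ℚ)*(b:ℚ)^2*c0*c1*c2 + (a:ℚ)^2*c0^2*c2 + (a:ℚ)^2*(b:ℚ)*c0*c1*c2
        + (a:ℚ)^2*(b:ℚ)^2*c0*c2^2 := by
    intro c0 c1 c2
    set x : K := A c0 + A c1 * g + A c2 * g ^ 2 with hx
    have hx0 : x * B 0 = c0 • B 0 + c1 • B 1 + c2 • B 2 := by
      rw [hB0, hB1, hB2]
      simp only [Algebra.smul_def]
      ring
    have hx1 : x * B 1 = c2 • B 0 + (c0 - (a:ℚ)*(b:ℚ)*c2) • B 1
        + (c1 + ((a:ℚ)+(b:ℚ))*c2) • B 2 := by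
      rw [hB0, hB1, hB2]
      simp only [Algebra.smul_def, map_sub, map_add, map_mul]
      linear_combination (A c2) * hg3
    have hx2 : x * B 2 = (c1 + ((a:ℚ)+(b:ℚ))*c2) • B 0
        + (c2 - (a:ℚ)*(b:ℚ)*c1 - (a:ℚ)*(b:ℚ)*((a:ℚ)+(b:ℚ))*c2) • B 1
        + (c0 + ((a:ℚ)+(b:ℚ))*c1 + ((a:ℚ)^2+(a:ℚ)*(b:ℚ)+(b:ℚ)^2)*c2) • B 2 := by
      rw [hB0, hB1, hB2]
      simp only [Algebra.smul_def, map_sub, map_add, map_mul, map_pow]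
      linear_combination (A c1 + A c2 * g + (A (a:ℚ) + A (b:ℚ)) * A c2) * hg3
    have hrepr : ∀ (d0 d1 d2 : ℚ) (i : Fin 3),
        B.repr (d0 • B 0 + d1 • B 1 + d2 • B 2) i = ![d0, d1, d2] i := by
      intro d0 d1 d2 i
      simp only [map_add, map_smul, Module.Basis.repr_self]
      fin_cases i <;> simp [Finsupp.single_apply]
    rw [Algebra.norm_eq_matrix_det B, Matrix.det_fin_three]
    simp only [Algebra.leftMulMatrix_eq_repr_mul]
    rw [hx0, hx1, hx2]
    simp only [hrepr]
    simp only [Matrix.cons_val_zero, Matrix.cons_val_one, Matrix.head_cons,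
      Matrix.cons_val_two, Matrix.tail_cons]
    ring
  -- express alphaT in the canonical form
  have hα : ∀ w : ℤ, alphaT a b ρ v w
      = A ((-v : ℤ) : ℚ) + A ((b * (a * v + w) + 1 : ℤ) : ℚ) * g
        + A ((-(a * v + w) : ℤ) : ℚ) * g ^ 2 := by
    intro w
    unfold alphaT
    rw [hAdef]
    simp only [map_intCast]
    push_cast
    ring
  rw [hα W, hα (W + 1), hnorm, hnorm]
  -- now a purely rational inequality
  have haQ : (2:ℚ) ≤ (a:ℚ) := by exact_mod_cast ha
  have habQ : (a:ℚ) ≤ (b:ℚ) - 2 := by exact_mod_cast hab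
  have hv0Q : (0:ℚ) ≤ (v:ℚ) := by exact_mod_cast hv0
  have hv1Q : (v:ℚ) ≤ (b:ℚ) - (a:ℚ) - 2 := by exact_mod_cast hv1
  have hW0Q : (0:ℚ) ≤ (W:ℚ) := by exact_mod_cast hW0
  have hW1Q : (W:ℚ) ≤ (a:ℚ) - 2 := by exact_mod_cast hW1
  push_cast
  have hu : (0:ℚ) ≤ (b:ℚ) - a - v - 2 := by linarith
  have ht : (0:ℚ) ≤ (a:ℚ) - 2 - W := by linarith
  have ha0 : (0:ℚ) ≤ (a:ℚ) := by linarith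
  have hb0 : (0:ℚ) ≤ (b:ℚ) := by linarith
  nlinarith [mul_nonneg (mul_nonneg (mul_nonneg ha0 hb0) hv0Q) hu,
    mul_nonneg (mul_nonneg ha0 hv0Q) ht,
    mul_nonneg (mul_nonneg hb0 hW0Q) hu,
    mul_nonneg (mul_nonneg ha0 hv0Q) hu,
    mul_nonneg (mul_nonneg ha0 hv0Q) hv0Q,
    mul_nonneg (mul_nonneg ha0 hW0Q) ht,
    mul_nonneg hW0Q ht, mul_nonneg hv0Q hu, mul_nonneg (mul_nonneg hv0Q hv0Q) ha0,
    mul_nonneg ha0 hv0Q, mul_nonneg hb0 hW0Q, sq_nonneg ((b:ℚ) - a), mul_nonneg hv0Q hv0Q]
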